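/- arXiv:2109.02036 — 3 statements merged into one kernel-verified Lean document; each statement's English description precedes it below -/
import Mathlib

section
/- Let A be the 8×6 matrix over ℤ/2ℤ whose rows are (1,1,0,0,0,0), (1,0,0,1,0,0), (1,0,0,0,1,0), (0,0,1,1,0,0), (0,1,0,0,1,0), (0,0,1,0,0,1), (0,0,1,0,1,0), (0,0,0,1,0,1), and let f₂ = (0,1,0,0,0,0,0,0) and f₇ = (0,0,0,0,0,0,1,0) in (ℤ/2ℤ)⁸. Then f₂ is not in the range of the linear map x ↦ A·x, f₇ is not in the range of this map, but f₂ + f₇ is in its range. -/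
/-- The differential d^{(-1,-1)} of the reduced Khovanov chain complex of L̃₄. -/
def A : Matrix (Fin 8) (Fin 6) (ZMod 2) :=
  !![1,1,0,0,0,0;
     1,0,0,1,0,0;
     1,0,0,0,1,0;
     0,0,1,1,0,0;
     0,1,0,0,1,0;
     0,0,1,0,0,1;
     0,0,1,0,1,0;
     0,0,0,1,0,1]

def f₂ : Fin 8 → ZMod 2 := ![0,1,0,0,0,0,0,0]

def f₇ : Fin 8 → ZMod 2 := ![0,0,0,0,0,0,1,0]

/-- f₂ and f₇ are not boundaries, but f₂ + f₇ is a boundary. -/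
theorem stmt_2 :
    f₂ ∉ LinearMap.range A.mulVecLin ∧
    f₇ ∉ LinearMap.range A.mulVecLin ∧
    f₂ + f₇ ∈ LinearMap.range A.mulVecLin := by
  refine ⟨?_, ?_, ?_⟩
  · simp only [LinearMap.mem_range, not_exists, Matrix.mulVecLin_apply]
    decide
  · simp only [LinearMap.mem_range, not_exists, Matrix.mulVecLin_apply]
    decide
  · refine ⟨![0,0,1,1,0,1], ?_⟩
    simp only [Matrix.mulVecLin_apply]
    decide
end

section
/- Let A be the 8×6 matrix over ℤ/2ℤ whose rows are (1,1,0,0,0,0), (1,0,0,1,0,0), (1,0,0,0,1,0), (0,0,1,1,0,0), (0,1,0,0,1,0), (0,0,1,0,0,1), (0,0,1,0,1,0), (0,0,0,1,0,1), and let B be the 2×8 matrix over ℤ/2ℤ with rows (1,0,1,0,1,0,0,0) and (0,0,0,1,0,1,0,1). Then the kernel of the linear map x ↦ B·x on (ℤ/2ℤ)⁸ equals the sum (as submodules of (ℤ/2ℤ)⁸) of the range of the linear map x ↦ A·x and the span of the vector f₂ = (0,1,0,0,0,0,0,0). -/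
/-- The differential d^{(0,-1)} of the reduced Khovanov chain complex of L̃₄. -/
def B : Matrix (Fin 2) (Fin 8) (ZMod 2) :=
  !![1,0,1,0,1,0,0,0;
     0,0,0,1,0,1,0,1]

@[simp] lemma cv8_5 {α} (x : α) (u : Fin 7 → α) : Matrix.vecCons x u 5 = u 4 := rfl
@[simp] lemma cv8_6 {α} (x : α) (u : Fin 7 → α) : Matrix.vecCons x u 6 = u 5 := rfl
@[simp] lemma cv8_7 {α} (x : α) (u : Fin 7 → α) : Matrix.vecCons x u 7 = u 6 := rfl
@[simp] lemma cv7_5 {α} (x : α) (u : Fin 6 → α) : Matrix.vecCons x u 5 = u 4 := rfl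
@[simp] lemma cv7_6 {α} (x : α) (u : Fin 6 → α) : Matrix.vecCons x u 6 = u 5 := rfl
@[simp] lemma cv6_5 {α} (x : α) (u : Fin 5 → α) : Matrix.vecCons x u 5 = u 4 := rfl

lemma hAc (c : Fin 6 → ZMod 2) :
    A.mulVec c = ![c 0 + c 1, c 0 + c 3, c 0 + c 4, c 2 + c 3,
      c 1 + c 4, c 2 + c 5, c 2 + c 4, c 3 + c 5] := by
  funext i
  fin_cases i <;> simp [A, Matrix.mulVec, dotProduct, Fin.sum_univ_six]

lemma hBx (x : Fin 8 → ZMod 2) :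
    B.mulVec x = ![x 0 + x 2 + x 4, x 3 + x 5 + x 7] := by
  funext i
  fin_cases i <;>
    simp [B, Matrix.mulVec, dotProduct, Fin.sum_univ_eight, add_assoc]

/-- ker B = im A + span{f₂}: the homology Khr^{(0,-1)}(L̃₄) ≅ ℤ/2ℤ is generated by f₂. -/
theorem stmt_4 :
    LinearMap.ker B.mulVecLin =
      LinearMap.range A.mulVecLin ⊔
        Submodule.span (ZMod 2) {(![0,1,0,0,0,0,0,0] : Fin 8 → ZMod 2)} := by
  apply le_antisymm
  · intro x hx
    have hB : B.mulVec x = 0 := hx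
    rw [hBx] at hB
    have h0 : x 0 + x 2 + x 4 = 0 := congrFun hB 0
    have h1 : x 3 + x 5 + x 7 = 0 := congrFun hB 1
    have h0' : x 4 = x 0 + x 2 := by
      have := h0; rwa [add_eq_zero_iff_eq_neg, CharTwo.neg_eq, eq_comm] at this
    have h1' : x 7 = x 3 + x 5 := by
      have := h1; rwa [add_eq_zero_iff_eq_neg, CharTwo.neg_eq, eq_comm] at this
    refine Submodule.mem_sup.mpr
      ⟨A.mulVecLin ![0, x 0, x 2 + x 6, x 2 + x 3 + x 6, x 2, x 2 + x 5 + x 6],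
        ⟨_, rfl⟩,
        (x 1 + x 2 + x 3 + x 6) • ![0,1,0,0,0,0,0,0],
        Submodule.smul_mem _ _ (Submodule.mem_span_singleton_self _), ?_⟩
    rw [Matrix.mulVecLin_apply, hAc]
    funext i
    fin_cases i <;>
      simp [h0', h1'] <;>
      (ring_nf; simp [mul_two, CharTwo.add_self_eq_zero, add_assoc, add_comm, add_left_comm])
  · apply sup_le
    · rintro _ ⟨y, rfl⟩
      show B.mulVec (A.mulVec y) = 0
      rw [Matrix.mulVec_mulVec]
      have hBA : B * A = 0 := by decide
      rw [hBA, Matrix.zero_mulVec]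
    · rw [Submodule.span_le, Set.singleton_subset_iff]
      show B.mulVec ![0,1,0,0,0,0,0,0] = 0
      rw [hBx]
      funext i
      fin_cases i <;> simp
end

section
/- Let C be the 6×8 matrix over ℤ/2ℤ whose rows are (1,1,0,1,0,0,0,0), (0,1,1,0,0,0,0,1), (1,0,1,0,0,0,1,0), (1,0,0,0,0,1,0,0), (0,0,0,1,0,0,1,1), (0,0,0,0,1,0,0,1), let D be the 8×2 matrix over ℤ/2ℤ whose columns are (1,0,0,1,0,1,1,0) and (0,0,1,0,1,0,1,1), and let v = (1,1,0,0,1,1,1,1) ∈ (ℤ/2ℤ)⁸. Then the kernel of the linear map x ↦ C·x equals the sum (as submodules of (ℤ/2ℤ)⁸) of the range of the linear map x ↦ D·x and the span of v. -/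
/-- The differential d^{(0,1)} of the reduced Khovanov chain complex of L̃₄. -/
def C : Matrix (Fin 6) (Fin 8) (ZMod 2) :=
  !![1,1,0,1,0,0,0,0;
     0,1,1,0,0,0,0,1;
     1,0,1,0,0,0,1,0;
     1,0,0,0,0,1,0,0;
     0,0,0,1,0,0,1,1;
     0,0,0,0,1,0,0,1]

/-- The differential d^{(-1,1)} of the reduced Khovanov chain complex of L̃₄,
whose two columns are (1,0,0,1,0,1,1,0) and (0,0,1,0,1,0,1,1). -/
def D : Matrix (Fin 8) (Fin 2) (ZMod 2) :=
  !![1,0;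
     0,0;
     0,1;
     1,0;
     0,1;
     1,0;
     1,1;
     0,1]


private lemma cons8_five {α : Type*} (a0 a1 a2 a3 a4 a5 a6 a7 : α) :
    ![a0,a1,a2,a3,a4,a5,a6,a7] (5 : Fin 8) = a5 := rfl

private lemma cons8_six {α : Type*} (a0 a1 a2 a3 a4 a5 a6 a7 : α) :
    ![a0,a1,a2,a3,a4,a5,a6,a7] (6 : Fin 8) = a6 := rfl

private lemma cons8_seven {α : Type*} (a0 a1 a2 a3 a4 a5 a6 a7 : α) :
    ![a0,a1,a2,a3,a4,a5,a6,a7] (7 : Fin 8) = a7 := rfl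

/-- ker C = im D + span{v}: the homology Khr^{(0,1)}(L̃₄) ≅ ℤ/2ℤ is generated by v^{(0,1)}. -/
theorem stmt_8 :
    LinearMap.ker C.mulVecLin =
      LinearMap.range D.mulVecLin ⊔
        Submodule.span (ZMod 2) {(![1,1,0,0,1,1,1,1] : Fin 8 → ZMod 2)} := by
  have hchar : (2 : ZMod 2) = 0 := rfl
  apply le_antisymm
  · intro x hx
    simp only [LinearMap.mem_ker, Matrix.mulVecLin_apply] at hx
    have h0 := congrFun hx 0
    have h1 := congrFun hx 1
    have h2 := congrFun hx 2
    have h3 := congrFun hx 3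
    have h5 := congrFun hx (Fin.succ 4)
    simp [C, Matrix.mulVec, dotProduct, Fin.sum_univ_succ] at h0 h1 h2 h3 h5
    have e0 : x 0 + (x 1 + x 3) = 0 := h0
    have e1 : x 1 + (x 2 + x 7) = 0 := h1
    have e2 : x 0 + (x 2 + x 6) = 0 := h2
    have e3 : x 0 + x 5 = 0 := h3
    have e5 : x 4 + x 7 = 0 := h5
    refine Submodule.mem_sup.2 ⟨D.mulVec ![x 0 + x 1, x 1 + x 4], ⟨_, rfl⟩,
      (x 1) • ![1,1,0,0,1,1,1,1],
      Submodule.smul_mem _ _ (Submodule.mem_span_singleton_self _), ?_⟩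
    funext i
    fin_cases i <;>
      simp [D, Matrix.mulVec, dotProduct, Fin.sum_univ_succ,
        cons8_five, cons8_six, cons8_seven] <;>
      [linear_combination x 1 * hchar;
       linear_combination e1 + e5 - (x 2 + x 7) * hchar;
       linear_combination e0 - x 3 * hchar;
       linear_combination x 1 * hchar;
       linear_combination e3 + (x 1 - x 5) * hchar;
       linear_combination e1 + e2 + e5 + (x 1 - x 2 - x 6 - x 7) * hchar;
       linear_combination e5 + (x 1 - x 7) * hchar]
  · apply sup_le
    · rintro _ ⟨y, rfl⟩
      simp only [LinearMap.mem_range, LinearMap.mem_ker, Matrix.mulVecLin_apply]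
      rw [Matrix.mulVec_mulVec, show C * D = 0 from by decide, Matrix.zero_mulVec]
    · rw [Submodule.span_singleton_le_iff_mem]
      simp only [LinearMap.mem_ker, Matrix.mulVecLin_apply]
      exact show C.mulVec ![1,1,0,0,1,1,1,1] = 0 from by decide
end
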